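/- arXiv:1205.7030 — 2 statements merged into one kernel-verified Lean document; each statement's English description precedes it below -/
import Mathlib

section
/- Let r > 0, t_S > 0, and let p, w_max, B, N₀, D₀ be real constants with 0 < D₀ − N₀ < ((p·w_max − B)/r)·(1 − exp(−r·t_S)). Define D : ℝ → ℝ by D(t) = (D₀ − N₀)·exp(r·t) + ((p·w_max − B)/r)·(1 − exp(r·t)) and set t_D := (1/r)·ln((p·w_max − B)/(p·w_max − B − r·(D₀ − N₀))). Then 0 < t_D < t_S and D(t_D) = 0. -/
/-!
With `A = p·w_max − B` and `Δ = D₀ − N₀`, the debt `Δ e^{rt} + (A/r)(1 − e^{rt})` vanishes exactly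
when `e^{rt} = A / (A − rΔ)`, which is the definition of `t_D`. Multiplying the hypothesis by `r`
turns it into `A e^{−r t_S} < A − rΔ`: it forces `A > 0`, `A − rΔ > 0`, and says that the ratio
`A / (A − rΔ)`, which exceeds `1` because `rΔ > 0`, stays below `e^{r t_S}`.
-/

open Real

noncomputable def debt (r A Δ t : ℝ) : ℝ := Δ * exp (r * t) + A / r * (1 - exp (r * t))

noncomputable def repaymentTime (r A Δ : ℝ) : ℝ := 1 / r * log (A / (A - r * Δ))

section

variable {r A Δ T : ℝ}

lemma pos_of_lt_div_mul_one_sub_exp (hr : 0 < r) (hT : 0 < T) (hΔ : 0 < Δ)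
    (h : Δ < A / r * (1 - exp (-r * T))) : 0 < A := by
  have hfac : 0 < 1 - exp (-r * T) := sub_pos.2 (exp_lt_one_iff.2 (by nlinarith))
  exact (div_pos_iff_of_pos_right hr).1 (pos_of_mul_pos_left (hΔ.trans h) hfac.le)

lemma mul_exp_neg_lt_sub_of_lt_div_mul (hr : 0 < r) (h : Δ < A / r * (1 - exp (-r * T))) :
    A * exp (-r * T) < A - r * Δ := by
  rw [div_mul_eq_mul_div, lt_div_iff₀ hr] at h
  linarith

lemma exp_mul_repaymentTime (hr : r ≠ 0) (hq : 0 < A / (A - r * Δ)) :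
    exp (r * repaymentTime r A Δ) = A / (A - r * Δ) := by
  rw [repaymentTime, ← mul_assoc, mul_one_div_cancel hr, one_mul, exp_log hq]

lemma debt_repaymentTime (hr : r ≠ 0) (hq : 0 < A / (A - r * Δ)) :
    debt r A Δ (repaymentTime r A Δ) = 0 := by
  have hden : A - r * Δ ≠ 0 := fun h ↦ by simp [h] at hq
  rw [debt, exp_mul_repaymentTime hr hq, one_sub_div hden]
  field_simp
  ring

lemma repaymentTime_pos (hr : 0 < r) (hrΔ : 0 < r * Δ) (hden : 0 < A - r * Δ) :
    0 < repaymentTime r A Δ := by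
  have hq : 1 < A / (A - r * Δ) := by rw [one_lt_div hden]; linarith
  exact mul_pos (one_div_pos.2 hr) (log_pos hq)

lemma repaymentTime_lt (hr : 0 < r) (hA : 0 < A) (hT : A * exp (-r * T) < A - r * Δ) :
    repaymentTime r A Δ < T := by
  have hden : 0 < A - r * Δ := (mul_pos hA (exp_pos _)).trans hT
  have hq : A / (A - r * Δ) < exp (r * T) := by
    rw [div_lt_iff₀' hden]
    calc A = A * exp (-r * T) * exp (r * T) := by rw [mul_assoc, ← exp_add]; simp
      _ < (A - r * Δ) * exp (r * T) := mul_lt_mul_of_pos_right hT (exp_pos _)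
  rw [repaymentTime, one_div_mul_eq_div, div_lt_iff₀' hr, ← log_exp (r * T)]
  exact log_lt_log (div_pos hA hden) hq

end

theorem stmt_16 (r tS p wmax B N₀ D₀ : ℝ) (hr : 0 < r) (htS : 0 < tS)
    (h1 : 0 < D₀ - N₀)
    (h2 : D₀ - N₀ < ((p * wmax - B) / r) * (1 - Real.exp (-r * tS)))
    (D : ℝ → ℝ)
    (hD : ∀ t, D t = (D₀ - N₀) * Real.exp (r * t)
          + ((p * wmax - B) / r) * (1 - Real.exp (r * t))) :
    0 < (1 / r) * Real.log ((p * wmax - B) / (p * wmax - B - r * (D₀ - N₀))) ∧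
    (1 / r) * Real.log ((p * wmax - B) / (p * wmax - B - r * (D₀ - N₀))) < tS ∧
    D ((1 / r) * Real.log ((p * wmax - B) / (p * wmax - B - r * (D₀ - N₀)))) = 0 := by
  have hA : 0 < p * wmax - B := pos_of_lt_div_mul_one_sub_exp hr htS h1 h2
  have hT := mul_exp_neg_lt_sub_of_lt_div_mul hr h2
  have hden : 0 < p * wmax - B - r * (D₀ - N₀) := (mul_pos hA (exp_pos _)).trans hT
  refine ⟨repaymentTime_pos hr (mul_pos hr h1) hden, repaymentTime_lt hr hA hT, ?_⟩
  rw [hD]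
  exact debt_repaymentTime hr.ne' (div_pos hA hden)
end

section
/- Let r, A, K, w_max, t_S be positive real constants and let p, B, N₀, D₀ be real constants satisfying (p − A − K)·w_max − B > 0, D₀ − N₀ > ((p·w_max − B)/r)·(1 − exp(−r·t_S)), and p·w_max − B − r·(D₀ − N₀) − (A + K)·w_max·exp(−r·t_S) > 0. Define D : ℝ → ℝ piecewise by D(t) = (D₀ − N₀)·exp(r·t) + ((p·w_max − B)/r)·(1 − exp(r·t)) for t ≤ t_S, and D(t) = (D₀ − N₀)·exp(r·t) + ((p·w_max − B)/r)·(1 − exp(r·t)) + ((A + K)·w_max/r)·(exp(r·(t − t_S)) − 1) for t ≥ t_S. Then D is continuous at t_S, D′(t) = r·D(t) − (p·w_max − B) for all t < t_S, D′(t) = r·D(t) + (A + K)·w_max − (p·w_max − B) for all t > t_S, and t_D := (1/r)·ln(((p − A − K)·w_max − B)/(p·w_max − B − r·(D₀ − N₀) − (A + K)·w_max·exp(−r·t_S))) satisfies t_D > t_S and D(t_D) = 0. -/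
/-!
On each side of `tS` the debt is of the form `a * exp (r * t) + b`, which solves
`y' = r * y - r * b`; the two forms agree at `tS`, so `D` is continuous there. After `tS`,
`r * a = -Q` and `r * b = P` with `P, Q > 0` the numerator and denominator of the logarithm's
argument, so the unique zero of `D` is at `exp (r * t) = P / Q`.
-/

open Real Set Filter

section ExpAffine

variable {a b r : ℝ}

theorem hasDerivAt_mul_exp_add (t : ℝ) :
    HasDerivAt (fun t => a * exp (r * t) + b) (r * (a * exp (r * t) + b) - r * b) t :=
  ((((hasDerivAt_id' t).const_mul r).exp.const_mul a).add_const b).congr_deriv (by ring)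

variable {D : ℝ → ℝ} {s t : ℝ}

theorem hasDerivAt_of_eq_mul_exp_add_of_le (hD : ∀ t ≤ s, D t = a * exp (r * t) + b)
    (ht : t < s) : HasDerivAt D (r * D t - r * b) t := by
  have hev : D =ᶠ[nhds t] fun t => a * exp (r * t) + b :=
    eventuallyEq_of_mem (Iio_mem_nhds ht) fun u hu => hD u (le_of_lt hu)
  rw [hD t ht.le]
  exact (hasDerivAt_mul_exp_add t).congr_of_eventuallyEq hev

theorem hasDerivAt_of_eq_mul_exp_add_of_ge (hD : ∀ t ≥ s, D t = a * exp (r * t) + b)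
    (ht : s < t) : HasDerivAt D (r * D t - r * b) t := by
  have hev : D =ᶠ[nhds t] fun t => a * exp (r * t) + b :=
    eventuallyEq_of_mem (Ioi_mem_nhds ht) fun u hu => hD u (le_of_lt hu)
  rw [hD t ht.le]
  exact (hasDerivAt_mul_exp_add t).congr_of_eventuallyEq hev

theorem continuousAt_of_eq_mul_exp_add {a' b' : ℝ} (hD : ∀ t ≤ s, D t = a * exp (r * t) + b)
    (hD' : ∀ t ≥ s, D t = a' * exp (r * t) + b') : ContinuousAt D s := by
  rw [continuousAt_iff_continuous_left_right]
  exact ⟨(hasDerivAt_mul_exp_add s).continuousAt.continuousWithinAt.congr hD (hD s le_rfl),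
    (hasDerivAt_mul_exp_add s).continuousAt.continuousWithinAt.congr hD' (hD' s le_rfl)⟩

end ExpAffine

theorem exp_mul_one_div_mul_log {r x : ℝ} (hr : r ≠ 0) (hx : 0 < x) :
    exp (r * (1 / r * log x)) = x := by
  rw [← mul_assoc, mul_one_div_cancel hr, one_mul, exp_log hx]

theorem lt_one_div_mul_log_iff {r x s : ℝ} (hr : 0 < r) (hx : 0 < x) :
    s < 1 / r * log x ↔ exp (r * s) < x := by
  rw [← lt_log_iff_exp_lt hx, one_div_mul_eq_div, lt_div_iff₀ hr, mul_comm]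

theorem stmt_17_general (r A K wmax tS p B N₀ D₀ : ℝ)
    (hr : 0 < r)
    (hprof : 0 < (p - A - K) * wmax - B)
    (hbig : ((p * wmax - B) / r) * (1 - Real.exp (-r * tS)) < D₀ - N₀)
    (hpos : 0 < p * wmax - B - r * (D₀ - N₀) - (A + K) * wmax * Real.exp (-r * tS))
    (D : ℝ → ℝ)
    (hD1 : ∀ t ≤ tS,
      D t = (D₀ - N₀) * Real.exp (r * t)
            + ((p * wmax - B) / r) * (1 - Real.exp (r * t)))
    (hD2 : ∀ t ≥ tS,
      D t = (D₀ - N₀) * Real.exp (r * t)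
            + ((p * wmax - B) / r) * (1 - Real.exp (r * t))
            + ((A + K) * wmax / r) * (Real.exp (r * (t - tS)) - 1)) :
    ContinuousAt D tS ∧
    (∀ t < tS, HasDerivAt D (r * D t - (p * wmax - B)) t) ∧
    (∀ t > tS, HasDerivAt D (r * D t + (A + K) * wmax - (p * wmax - B)) t) ∧
    tS < (1 / r) * Real.log (((p - A - K) * wmax - B) /
        (p * wmax - B - r * (D₀ - N₀) - (A + K) * wmax * Real.exp (-r * tS))) ∧
    D ((1 / r) * Real.log (((p - A - K) * wmax - B) /
        (p * wmax - B - r * (D₀ - N₀) - (A + K) * wmax * Real.exp (-r * tS)))) = 0 := by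
  set C := (p * wmax - B) / r
  set M := (A + K) * wmax / r
  set P := (p - A - K) * wmax - B with hP
  set Q := p * wmax - B - r * (D₀ - N₀) - (A + K) * wmax * exp (-r * tS) with hQ
  have hrC : r * C = p * wmax - B := mul_div_cancel₀ _ hr.ne'
  have hrM : r * M = (A + K) * wmax := mul_div_cancel₀ _ hr.ne'
  have hexp_sub (t : ℝ) : exp (r * (t - tS)) = exp (-r * tS) * exp (r * t) := by
    rw [← exp_add]; ring_nf
  have hD1' : ∀ t ≤ tS, D t = (D₀ - N₀ - C) * exp (r * t) + C := fun t ht => by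
    rw [hD1 t ht]; ring
  have hPr : P / r = C - M := by
    rw [div_eq_iff hr.ne', hP]; linear_combination hrM - hrC
  have hQr : Q / r = C - (D₀ - N₀) - M * exp (-r * tS) := by
    rw [div_eq_iff hr.ne', hQ]; linear_combination exp (-r * tS) * hrM - hrC
  have hD2' : ∀ t ≥ tS, D t = -(Q / r) * exp (r * t) + P / r := fun t ht => by
    rw [hD2 t ht, hexp_sub, hPr, hQr]; ring
  have hlt : tS < 1 / r * log (P / Q) := by
    rw [lt_one_div_mul_log_iff hr (div_pos hprof hpos), lt_div_iff₀ hpos]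
    have he : exp (r * tS) * exp (-r * tS) = 1 := by
      rw [← exp_add, neg_mul, add_neg_cancel, exp_zero]
    -- `hbig` multiplied by `r * exp (r * tS)`
    rw [hP, hQ]
    linear_combination mul_lt_mul_of_pos_right hbig (mul_pos hr (exp_pos (r * tS)))
      - (exp (r * tS) - exp (r * tS) * exp (-r * tS)) * hrC
      + (p * wmax - B - (A + K) * wmax) * he
  refine ⟨continuousAt_of_eq_mul_exp_add hD1' hD2',
    fun t ht => (hasDerivAt_of_eq_mul_exp_add_of_le hD1' ht).congr_deriv (by rw [hrC]),
    fun t ht => (hasDerivAt_of_eq_mul_exp_add_of_ge hD2' ht).congr_deriv ?_, hlt, ?_⟩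
  · rw [mul_div_cancel₀ _ hr.ne']; ring
  · rw [hD2' _ hlt.le, exp_mul_one_div_mul_log hr.ne' (div_pos hprof hpos)]
    field_simp; ring

theorem stmt_17 (r A K wmax tS p B N₀ D₀ : ℝ)
    (hr : 0 < r) (hA : 0 < A) (hK : 0 < K) (hw : 0 < wmax) (htS : 0 < tS)
    (hprof : 0 < (p - A - K) * wmax - B)
    (hbig : ((p * wmax - B) / r) * (1 - Real.exp (-r * tS)) < D₀ - N₀)
    (hpos : 0 < p * wmax - B - r * (D₀ - N₀) - (A + K) * wmax * Real.exp (-r * tS))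
    (D : ℝ → ℝ)
    (hD1 : ∀ t ≤ tS,
      D t = (D₀ - N₀) * Real.exp (r * t)
            + ((p * wmax - B) / r) * (1 - Real.exp (r * t)))
    (hD2 : ∀ t ≥ tS,
      D t = (D₀ - N₀) * Real.exp (r * t)
            + ((p * wmax - B) / r) * (1 - Real.exp (r * t))
            + ((A + K) * wmax / r) * (Real.exp (r * (t - tS)) - 1)) :
    ContinuousAt D tS ∧
    (∀ t < tS, HasDerivAt D (r * D t - (p * wmax - B)) t) ∧
    (∀ t > tS, HasDerivAt D (r * D t + (A + K) * wmax - (p * wmax - B)) t) ∧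
    tS < (1 / r) * Real.log (((p - A - K) * wmax - B) /
        (p * wmax - B - r * (D₀ - N₀) - (A + K) * wmax * Real.exp (-r * tS))) ∧
    D ((1 / r) * Real.log (((p - A - K) * wmax - B) /
        (p * wmax - B - r * (D₀ - N₀) - (A + K) * wmax * Real.exp (-r * tS)))) = 0 :=
  stmt_17_general r A K wmax tS p B N₀ D₀ hr hprof hbig hpos D hD1 hD2
end
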